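/- Let R = GF(2)[c]/(c³) and S = R[[d]]. For ε ∈ GF(2) and every natural number i, the coefficient of c² in the d^i coefficient of (1 + c + d + ε·c²)·(1 + c + c² + d)^{-1} ∈ S equals 1 + ε. -/

import Mathlib

/-!
In characteristic 2 the denominator is `C u - X` with `u = 1 + c + c²`, a unit with inverse
`1 + c` because `c³ = 0`; so its inverse is `invUnitsSub u = ∑ (1 + c)^(k+1) d^k`. The numerator
is the denominator plus `(1 + ε) c²`, and `c² (1 + c) = c²`, so the quotient is
`1 + (1 + ε) c² ∑ d^k`, whose `d^i` coefficient has `c²`-coefficient `1 + ε`.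
-/

open Polynomial PowerSeries

noncomputable section

/-- The ring `R = GF(2)[c] / (c³)`. -/
abbrev R2 : Type := AdjoinRoot (Polynomial.X ^ 3 : Polynomial (ZMod 2))

/-- The class of the variable `c` in `R = GF(2)[c] / (c³)`. -/
def cR : R2 := AdjoinRoot.root _

/-- The power series ring `S = R[[d]]`. -/
abbrev S2 : Type := PowerSeries R2

/-- The image of `c` in `S = R[[d]]`. -/
def cS : S2 := PowerSeries.C cR

/-- The variable `d` of `S = R[[d]]`. -/
def dS : S2 := PowerSeries.X

/-- The coefficient of `c²` of an element of `R = GF(2)[c] / (c³)`,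
computed via the unique representative polynomial of degree `< 3`. -/
def coefc2 (x : R2) : ZMod 2 :=
  (AdjoinRoot.modByMonicHom (Polynomial.monic_X_pow 3) x).coeff 2

namespace PowerSeries

variable {R : Type*} [CommRing R]

theorem C_sub_X_mul_invUnitsSub (u : Rˣ) : (C (u : R) - X) * invUnitsSub u = 1 := by
  rw [mul_comm, invUnitsSub_mul_sub]

theorem inverse_C_sub_X (u : Rˣ) : Ring.inverse (C (u : R) - X) = invUnitsSub u :=
  Ring.inverse_unit (.mkOfMulEqOne _ _ (C_sub_X_mul_invUnitsSub u))

theorem coeff_C_mul_invUnitsSub_of_mul_inv_eq {a : R} {u : Rˣ} (h : a * ↑u⁻¹ = a) (n : ℕ) :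
    coeff n (C a * invUnitsSub u) = a := by
  rw [coeff_C_mul, coeff_invUnitsSub, one_divp, ← inv_pow, Units.val_pow_eq_pow_val]
  induction n with
  | zero => simpa using h
  | succ n ih => rwa [pow_succ, ← mul_assoc, ih]

end PowerSeries

instance : Nontrivial R2 := AdjoinRoot.nontrivial _ (by simp)

instance : CharP R2 2 := charP_of_injective_algebraMap' (ZMod 2) 2

instance : CharP S2 2 := charP_of_injective_algebraMap' (ZMod 2) 2

theorem cR_pow_three : cR ^ 3 = 0 := by
  rw [cR, ← AdjoinRoot.mk_X, ← map_pow]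
  exact AdjoinRoot.mk_self

def unitR : R2ˣ := Units.mkOfMulEqOne (1 + cR + cR ^ 2) (1 + cR) (by
  linear_combination cR_pow_three + (cR + cR ^ 2) * CharTwo.two_eq_zero (R := R2))

theorem coefc2_mk_of_degree_lt {p : (ZMod 2)[X]} (hp : p.degree < 3) :
    coefc2 (AdjoinRoot.mk _ p) = p.coeff 2 := by
  rw [coefc2, AdjoinRoot.modByMonicHom_mk, (modByMonic_eq_self_iff (monic_X_pow 3)).2]
  simpa using hp

theorem coefc2_add (x y : R2) : coefc2 (x + y) = coefc2 x + coefc2 y := by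
  simp [coefc2]

theorem coefc2_smul (a : ZMod 2) (x : R2) : coefc2 (a • x) = a * coefc2 x := by
  simp [coefc2]

theorem coefc2_zero : coefc2 0 = 0 := by
  simp [coefc2]

theorem coefc2_one : coefc2 1 = 0 := by
  simpa [Polynomial.coeff_one] using coefc2_mk_of_degree_lt (p := 1) (by compute_degree!)

theorem coefc2_cR_sq : coefc2 (cR ^ 2) = 1 := by
  rw [cR, ← AdjoinRoot.mk_X, ← map_pow, coefc2_mk_of_degree_lt (by compute_degree!),
    Polynomial.coeff_X_pow_self]

theorem one_add_cS_add_cS_sq_add_dS_eq :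
    1 + cS + cS ^ 2 + dS = PowerSeries.C (unitR : R2) - PowerSeries.X := by
  simp [cS, dS, unitR, CharTwo.sub_eq_add]

theorem one_add_cS_add_dS_add_C_smul_eq (ε : ZMod 2) : 1 + cS + dS + PowerSeries.C (ε • cR ^ 2) =
    (1 + cS + cS ^ 2 + dS) + PowerSeries.C ((1 + ε) • cR ^ 2) := by
  simp only [cS, add_smul, one_smul, map_add, map_pow]
  linear_combination -PowerSeries.C cR ^ 2 * CharTwo.two_eq_zero (R := S2)

theorem cR_sq_mul_unitR_inv : cR ^ 2 * ↑unitR⁻¹ = cR ^ 2 := by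
  show cR ^ 2 * (1 + cR) = cR ^ 2
  linear_combination cR_pow_three

theorem coefc2_eval (ε : ZMod 2) (i : ℕ) :
    coefc2 (PowerSeries.coeff i
        ((1 + cS + dS + PowerSeries.C (ε • cR ^ 2)) *
          Ring.inverse (1 + cS + cS ^ 2 + dS))) = 1 + ε := by
  have coefc2_coeff_one : coefc2 (PowerSeries.coeff i 1) = 0 := by
    rw [PowerSeries.coeff_one]
    split_ifs
    exacts [coefc2_one, coefc2_zero]
  rw [one_add_cS_add_dS_add_C_smul_eq, one_add_cS_add_cS_sq_add_dS_eq, inverse_C_sub_X, add_mul,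
    C_sub_X_mul_invUnitsSub, map_add,
    coeff_C_mul_invUnitsSub_of_mul_inv_eq (by rw [smul_mul_assoc, cR_sq_mul_unitR_inv]),
    coefc2_add, coefc2_smul, coefc2_cR_sq, coefc2_coeff_one, zero_add, mul_one]

end
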